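/- As λ → 0⁺, the size-based balanced tree-pattern kernel of order h converges to the walk-count kernel of length h−1: lim_{λ→0} K^h_Size(G_1,G_2) = K^{h−1}_Walk(G_1,G_2), where K^n_Walk(G_1,G_2) counts pairs of identically-labeled walks of length n in G_1 and G_2. -/

import Mathlib

open scoped Classical

/-- A finite labeled directed graph: vertices `V`, edge relation `E`, vertex
labels `lv` and edge labels `le`, all labels taken in the alphabet `A`. -/
structure LGraph (A : Type) where
  V : Type
  [fintypeV : Fintype V]
  [decEqV : DecidableEq V]
  E : V → V → Prop
  [decE : DecidableRel E]
  lv : V → A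
  le : V → V → A

attribute [instance] LGraph.fintypeV LGraph.decEqV LGraph.decE

/-- A labeled rooted tree: a root label together with the list of children,
each child carrying the label of the edge connecting it to its parent and
the corresponding labeled subtree. -/
inductive LTree (A : Type) : Type where
  | node : A → List (A × LTree A) → LTree A

namespace LTree

variable {A : Type}

-- `size t` : number of nodes
mutual
def size : LTree A → ℕ
  | .node _ cs => 1 + sizeList cs
def sizeList : List (A × LTree A) → ℕ
  | [] => 0
  | (_, t) :: rest => size t + sizeList rest
end

-- `depth t` : maximal number of edges from the root to a node, plus one
mutual
def depth : LTree A → ℕ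
  | .node _ cs => 1 + depthList cs
def depthList : List (A × LTree A) → ℕ
  | [] => 0
  | (_, t) :: rest => max (depth t) (depthList rest)
end

-- `leaves t` : number of leaf nodes
mutual
def leaves : LTree A → ℕ
  | .node _ [] => 1
  | .node _ (c :: cs) => leavesList (c :: cs)
def leavesList : List (A × LTree A) → ℕ
  | [] => 0
  | (_, t) :: rest => leaves t + leavesList rest
end

/-- branching cardinality: number of leaves minus one -/
def branch (t : LTree A) : ℕ := t.leaves - 1

-- `balanced t h` : `t` is perfectly depth-balanced of order `h` (every leaf at depth `h`)
mutual
def balanced : LTree A → ℕ → Prop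
  | .node _ [], h => h = 1
  | .node _ (c :: cs), h => balancedList (c :: cs) (h - 1) ∧ 2 ≤ h
def balancedList : List (A × LTree A) → ℕ → Prop
  | [], _ => True
  | (_, t) :: rest, h => balanced t h ∧ balancedList rest h
end

end LTree

/-- A tree of graph vertices: the candidate images of the nodes of a tree
under a tree-pattern. -/
inductive VTree (V : Type) : Type where
  | node : V → List (VTree V) → VTree V

namespace VTree

variable {V : Type}

/-- the vertex at the root -/
def root : VTree V → V
  | .node u _ => u

/-- the list of subtrees at the root -/
def children : VTree V → List (VTree V)
  | .node _ ps => ps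

end VTree

/-- `isPattern G t p` : the decoration `p` of the tree `t` by vertices of `G` is a
tree-pattern of `G` with respect to `t`: node labels match, every tree edge is
realized by an edge of `G` with matching label, and sibling nodes are mapped to
distinct vertices. -/
def isPattern {A : Type} (G : LGraph A) : LTree A → VTree G.V → Prop
  | .node a cs, .node u ps =>
    G.lv u = a ∧ ps.length = cs.length ∧
    (∀ i j : Fin ps.length, i ≠ j → (ps.get i).root ≠ (ps.get j).root) ∧
    ∀ i : Fin ps.length, ∀ (h : (i : ℕ) < cs.length),
      G.E u (ps.get i).root ∧ G.le u (ps.get i).root = (cs.get ⟨i, h⟩).1 ∧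
      isPattern G (cs.get ⟨i, h⟩).2 (ps.get i)
termination_by _ p => sizeOf p
decreasing_by
  have h1 : sizeOf (ps.get i) < sizeOf ps := List.sizeOf_lt_of_mem (ps.get_mem i)
  simp only [VTree.node.sizeOf_spec]
  omega

/-- `psiRoot G t u` : number of tree-patterns of `G` with respect to `t` rooted at `u`. -/
noncomputable def psiRoot {A : Type} (G : LGraph A) (t : LTree A) (u : G.V) : ℕ :=
  Set.ncard {p : VTree G.V | isPattern G t p ∧ p.root = u}

/-- `psi G t` : number of tree-patterns of `G` with respect to `t`. -/
noncomputable def psi {A : Type} (G : LGraph A) (t : LTree A) : ℕ :=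
  Set.ncard {p : VTree G.V | isPattern G t p}

/-- `isWalk G w` : `w` is a walk of length `n` in `G` (consecutive vertices joined by edges). -/
def isWalk {A : Type} (G : LGraph A) {n : ℕ} (w : Fin (n + 1) → G.V) : Prop :=
  ∀ i j : Fin (n + 1), (j : ℕ) = (i : ℕ) + 1 → G.E (w i) (w j)

/-- `noTotWalk G w` : the walk `w` is no-tottering: `v_i ≠ v_{i+2}` for all `i`. -/
def noTotWalk {A : Type} (G : LGraph A) {n : ℕ} (w : Fin (n + 1) → G.V) : Prop :=
  ∀ i j : Fin (n + 1), (j : ℕ) = (i : ℕ) + 2 → w i ≠ w j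

/-- `sameLabels G1 G2 w1 w2` : the two walks are identically labeled (corresponding
vertices and edges carry the same labels). -/
def sameLabels {A : Type} (G1 G2 : LGraph A) {n : ℕ}
    (w1 : Fin (n + 1) → G1.V) (w2 : Fin (n + 1) → G2.V) : Prop :=
  (∀ i, G1.lv (w1 i) = G2.lv (w2 i)) ∧
    (∀ i j : Fin (n + 1), (j : ℕ) = (i : ℕ) + 1 → G1.le (w1 i) (w1 j) = G2.le (w2 i) (w2 j))

/-- Walk-count kernel `K^n_Walk`: number of pairs of identically labeled walks of
length `n` in `G1` and `G2`. -/
noncomputable def walkKernel {A : Type} (G1 G2 : LGraph A) (n : ℕ) : ℝ :=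
  ∑ w1 : Fin (n + 1) → G1.V, ∑ w2 : Fin (n + 1) → G2.V,
    if isWalk G1 w1 ∧ isWalk G2 w2 ∧ sameLabels G1 G2 w1 w2 then 1 else 0

/-!
Only finitely many balanced trees of order `h` have a tree-pattern in `G₁`: a pattern determines
its tree, and the patterns of balanced trees have bounded depth and, since siblings sit on distinct
vertices, bounded branching. So the kernel is a polynomial in `λ`, and its value at `0` keeps only
the trees of size `h`. A balanced tree of order `h` and size `h` is a chain, whose tree-patterns
are exactly the walks of length `h - 1` carrying its labels; summing the products of these walk
counts over all chains counts the pairs of identically labeled walks.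
-/

namespace LTree

variable {A : Type}

theorem one_le_size (t : LTree A) : 1 ≤ t.size := by
  cases t with
  | node _ cs => simp only [size]; omega

theorem sizeList_eq_zero_iff {l : List (A × LTree A)} : sizeList l = 0 ↔ l = [] := by
  cases l with
  | nil => simp [sizeList]
  | cons c l =>
    have := one_le_size c.2
    simp only [sizeList, reduceCtorEq, iff_false]
    omega

mutual
theorem le_size_of_balanced : ∀ {t : LTree A} {h : ℕ}, t.balanced h → h ≤ t.size
  | .node _ [], _, hb => by simp only [balanced] at hb; simp [size, hb]
  | .node _ (_ :: _), _, hb => by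
    have := le_sizeList_of_balancedList hb.1 (List.cons_ne_nil _ _)
    simp only [size]
    omega

theorem le_sizeList_of_balancedList :
    ∀ {l : List (A × LTree A)} {h : ℕ}, balancedList l h → l ≠ [] → h ≤ sizeList l
  | [], _, _, hne => absurd rfl hne
  | (_, t) :: _, _, hb, _ => by
    have := le_size_of_balanced hb.1
    simp only [sizeList]
    omega
end

theorem balanced_of_mem_balancedList :
    ∀ {l : List (A × LTree A)} {h : ℕ}, balancedList l h → ∀ x ∈ l, x.2.balanced h
  | [], _, _, _, hx => absurd hx List.not_mem_nil
  | _ :: _, _, hb, _, hx => by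
    rcases List.mem_cons.1 hx with rfl | hx
    · exact hb.1
    · exact balanced_of_mem_balancedList hb.2 _ hx

theorem exists_eq_node_nil_of_balanced_one {t : LTree A} (hb : t.balanced 1) :
    ∃ a, t = .node a [] := by
  match t, hb with
  | .node a [], _ => exact ⟨a, rfl⟩
  | .node _ (_ :: _), hb => exact absurd hb.2 (by omega)

theorem exists_eq_node_singleton_of_balanced {t : LTree A} {n : ℕ} (hb : t.balanced (n + 2))
    (hs : t.size = n + 2) :
    ∃ a e c, t = .node a [(e, c)] ∧ c.balanced (n + 1) ∧ c.size = n + 1 := by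
  match t, hb with
  | .node _ [], hb => exact absurd hb (by simp [balanced])
  | .node a ((e, c) :: cs), hb =>
    have hc : c.balanced (n + 1) := hb.1.1
    have := le_size_of_balanced hc
    simp only [size, sizeList] at hs
    have hcs : cs = [] := sizeList_eq_zero_iff.1 (by omega)
    exact ⟨a, e, c, by rw [hcs], hc, by omega⟩

end LTree

theorem Set.Finite.setOf_list_length_le {X : Type*} {S : Set X} (hS : S.Finite) (k : ℕ) :
    {l : List X | l.length ≤ k ∧ ∀ x ∈ l, x ∈ S}.Finite := by
  have := hS.to_subtype
  refine ((List.finite_length_le S k).image (List.map Subtype.val)).subset ?_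
  rintro l ⟨hlen, hmem⟩
  exact ⟨l.attach.map fun x => ⟨x.1, hmem x.1 x.2⟩, by simpa using hlen, by simp⟩

namespace VTree

def bounded (V : Type) (k : ℕ) : ℕ → Set (VTree V)
  | 0 => ∅
  | h + 1 => {p | p.children.length ≤ k ∧ ∀ q ∈ p.children, q ∈ bounded V k h}

theorem finite_bounded (V : Type) [Finite V] (k : ℕ) : ∀ h, (bounded V k h).Finite
  | 0 => Set.finite_empty
  | h + 1 => by
    refine ((Set.finite_univ.prod ((finite_bounded V k h).setOf_list_length_le k)).image
      fun up => VTree.node up.1 up.2).subset ?_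
    rintro ⟨u, ps⟩ hp
    exact ⟨(u, ps), ⟨trivial, hp⟩, rfl⟩

end VTree

section Patterns

variable {A : Type} (G : LGraph A)

def graphTree : VTree G.V → LTree A
  | .node u ps => .node (G.lv u) (ps.map fun q => (G.le u q.root, graphTree q))

variable {G}

theorem eq_graphTree_of_isPattern : ∀ {t : LTree A} {p : VTree G.V},
    isPattern G t p → t = graphTree G p
  | .node a cs, .node u ps, hp => by
    rw [isPattern] at hp
    obtain ⟨hlv, hlen, -, hchild⟩ := hp
    rw [graphTree, hlv]
    congr 1
    refine List.ext_getElem (by simp [hlen]) fun i hi hi' => ?_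
    have hi'' : i < ps.length := by simpa using hi'
    obtain ⟨-, hle, hq⟩ := hchild ⟨i, hi''⟩ hi
    simp only [List.getElem_map]
    exact Prod.ext hle.symm (eq_graphTree_of_isPattern hq)
termination_by _ p => sizeOf p
decreasing_by
  have := List.sizeOf_lt_of_mem (List.getElem_mem hi'')
  simp only [VTree.node.sizeOf_spec]
  omega

theorem isPattern_mem_bounded : ∀ {h : ℕ} {t : LTree A} {p : VTree G.V},
    t.balanced h → isPattern G t p → p ∈ VTree.bounded G.V (Fintype.card G.V) h
  | 0, .node _ [], _, hb, _ => absurd hb (by simp [LTree.balanced])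
  | 0, .node _ (_ :: _), _, hb, _ => absurd hb.2 (by omega)
  | h + 1, .node a cs, .node u ps, hb, hp => by
    rw [isPattern] at hp
    obtain ⟨-, hlen, hdistinct, hchild⟩ := hp
    refine ⟨?_, fun q hq => ?_⟩
    · simpa [VTree.children] using Fintype.card_le_of_injective _
        fun i j hij => (not_imp_not.1 (hdistinct i j)) hij
    · obtain ⟨i, rfl⟩ := List.mem_iff_get.1 hq
      have hi : (i : ℕ) < cs.length := hlen ▸ i.isLt
      refine isPattern_mem_bounded ?_ (hchild i hi).2.2
      match cs, hb with
      | [], _ => exact absurd hi (by simp)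
      | c :: cs, hb => exact LTree.balanced_of_mem_balancedList hb.1 _ (List.get_mem _ _)

variable (G)

theorem finite_setOf_balanced_isPattern (h : ℕ) :
    {t : LTree A | t.balanced h ∧ ∃ p, isPattern G t p}.Finite :=
  ((VTree.finite_bounded G.V _ h).image (graphTree G)).subset
    fun _ ⟨hb, _, hp⟩ =>
      ⟨_, isPattern_mem_bounded hb hp, (eq_graphTree_of_isPattern hp).symm⟩

end Patterns

section Walks

variable {A : Type} {G G1 G2 : LGraph A}

theorem isWalk_zero (w : Fin 1 → G.V) : isWalk G w :=
  fun i j hij => absurd hij (by omega)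

theorem isWalk_succ_iff {n : ℕ} {w : Fin (n + 2) → G.V} :
    isWalk G w ↔ G.E (w 0) (w 1) ∧ isWalk G (Fin.tail w) := by
  simp [isWalk, Fin.forall_fin_succ, Fin.tail]

theorem sameLabels_zero_iff {w1 : Fin 1 → G1.V} {w2 : Fin 1 → G2.V} :
    sameLabels G1 G2 w1 w2 ↔ G1.lv (w1 0) = G2.lv (w2 0) := by
  simp [sameLabels]

theorem sameLabels_succ_iff {n : ℕ} {w1 : Fin (n + 2) → G1.V} {w2 : Fin (n + 2) → G2.V} :
    sameLabels G1 G2 w1 w2 ↔ G1.lv (w1 0) = G2.lv (w2 0) ∧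
      G1.le (w1 0) (w1 1) = G2.le (w2 0) (w2 1) ∧
        sameLabels G1 G2 (Fin.tail w1) (Fin.tail w2) := by
  simp only [sameLabels, Fin.forall_fin_succ (n := n + 1), Fin.forall_fin_succ (n := n)]
  simp [Fin.tail]
  tauto

end Walks

section Chains

variable {A : Type}

def walkPattern {V : Type} : ∀ {n : ℕ}, (Fin (n + 1) → V) → VTree V
  | 0, w => .node (w 0) []
  | _ + 1, w => .node (w 0) [walkPattern (Fin.tail w)]

def labelChain (G : LGraph A) : ∀ {n : ℕ}, (Fin (n + 1) → G.V) → LTree A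
  | 0, w => .node (G.lv (w 0)) []
  | _ + 1, w => .node (G.lv (w 0)) [(G.le (w 0) (w 1), labelChain G (Fin.tail w))]

theorem root_walkPattern {V : Type} {n : ℕ} (w : Fin (n + 1) → V) :
    (walkPattern w).root = w 0 := by
  cases n <;> rfl

theorem walkPattern_injective {V : Type} : ∀ {n : ℕ},
    Function.Injective (walkPattern : (Fin (n + 1) → V) → VTree V)
  | 0, w1, w2, h => by
    simp only [walkPattern, VTree.node.injEq, and_true] at h
    exact funext fun i => Fin.fin_one_eq_zero i ▸ h
  | _ + 1, w1, w2, h => by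
    simp only [walkPattern, VTree.node.injEq, List.cons.injEq, and_true] at h
    rw [← Fin.cons_self_tail w1, ← Fin.cons_self_tail w2, h.1, walkPattern_injective h.2]

variable {G G1 G2 : LGraph A}

theorem balanced_labelChain :
    ∀ {n : ℕ} (w : Fin (n + 1) → G.V), (labelChain G w).balanced (n + 1)
  | 0, _ => rfl
  | _ + 1, w => ⟨⟨balanced_labelChain (Fin.tail w), trivial⟩, by omega⟩

theorem size_labelChain : ∀ {n : ℕ} (w : Fin (n + 1) → G.V), (labelChain G w).size = n + 1
  | 0, _ => rfl
  | _ + 1, w => by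
    simp only [labelChain, LTree.size, LTree.sizeList, size_labelChain (Fin.tail w)]
    omega

theorem labelChain_eq_labelChain_iff :
    ∀ {n : ℕ} {w1 : Fin (n + 1) → G1.V} {w2 : Fin (n + 1) → G2.V},
    labelChain G1 w1 = labelChain G2 w2 ↔ sameLabels G1 G2 w1 w2
  | 0, _, _ => by simp [labelChain, sameLabels_zero_iff]
  | _ + 1, _, _ => by
    simp [labelChain, sameLabels_succ_iff, labelChain_eq_labelChain_iff]

theorem isPattern_nil_iff {a : A} {u : G.V} {ps : List (VTree G.V)} :
    isPattern G (.node a []) (.node u ps) ↔ G.lv u = a ∧ ps = [] := by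
  rw [isPattern]
  constructor
  · rintro ⟨hlv, hlen, -⟩
    exact ⟨hlv, List.eq_nil_of_length_eq_zero hlen⟩
  · rintro ⟨hlv, rfl⟩
    exact ⟨hlv, rfl, fun i => i.elim0, fun i => i.elim0⟩

theorem isPattern_singleton_iff {a e : A} {c : LTree A} {u : G.V} {ps : List (VTree G.V)} :
    isPattern G (.node a [(e, c)]) (.node u ps) ↔
      ∃ q, ps = [q] ∧ G.lv u = a ∧ G.E u q.root ∧ G.le u q.root = e ∧
        isPattern G c q := by
  rw [isPattern]
  constructor
  · rintro ⟨hlv, hlen, -, hchild⟩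
    obtain ⟨q, rfl⟩ := List.length_eq_one_iff.1 hlen
    exact ⟨q, rfl, hlv, hchild 0 (by simp)⟩
  · rintro ⟨q, rfl, hlv, hchild⟩
    refine ⟨hlv, rfl, fun i j hij => absurd (Subsingleton.elim (α := Fin 1) i j) hij,
      fun i _ => ?_⟩
    obtain rfl : i = 0 := Subsingleton.elim (α := Fin 1) i 0
    exact hchild

theorem isPattern_walkPattern : ∀ {n : ℕ} {w : Fin (n + 1) → G.V},
    isWalk G w → isPattern G (labelChain G w) (walkPattern w)
  | 0, _, _ => isPattern_nil_iff.2 ⟨rfl, rfl⟩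
  | _ + 1, w, hw => by
    obtain ⟨hE, hw'⟩ := isWalk_succ_iff.1 hw
    exact isPattern_singleton_iff.2 ⟨_, rfl, rfl, by rwa [root_walkPattern],
      by rw [root_walkPattern]; rfl, isPattern_walkPattern hw'⟩

theorem exists_walk_of_isPattern : ∀ {n : ℕ} {t : LTree A} {p : VTree G.V},
    t.balanced (n + 1) → t.size = n + 1 → isPattern G t p →
      ∃ w : Fin (n + 1) → G.V, isWalk G w ∧ walkPattern w = p ∧ labelChain G w = t
  | 0, t, .node u ps, hb, _, hp => by
    obtain ⟨a, rfl⟩ := LTree.exists_eq_node_nil_of_balanced_one hb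
    obtain ⟨rfl, rfl⟩ := isPattern_nil_iff.1 hp
    exact ⟨fun _ => u, isWalk_zero _, rfl, rfl⟩
  | _ + 1, t, .node u ps, hb, hs, hp => by
    obtain ⟨a, e, c, rfl, hc, hcs⟩ := LTree.exists_eq_node_singleton_of_balanced hb hs
    obtain ⟨q, rfl, rfl, hE, rfl, hq⟩ := isPattern_singleton_iff.1 hp
    obtain ⟨w, hw, rfl, rfl⟩ := exists_walk_of_isPattern hc hcs hq
    refine ⟨Fin.cons u w, isWalk_succ_iff.2 ⟨?_, by simpa using hw⟩, ?_, ?_⟩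
    · simpa [root_walkPattern] using hE
    · simp [walkPattern]
    · simp [labelChain, root_walkPattern]

end Chains

theorem Finset.sum_sum_ite_mul_sum_ite_eq {α β γ R : Type*} [Fintype α] [Fintype β]
    [NonAssocSemiring R] [DecidableEq γ] (s : Finset γ) {p : α → Prop} {q : β → Prop}
    [DecidablePred p] [DecidablePred q] {f : α → γ} {g : β → γ}
    (hf : ∀ a, p a → f a ∈ s) :
    ∑ c ∈ s, (∑ a, if p a ∧ f a = c then (1 : R) else 0) *
        (∑ b, if q b ∧ g b = c then 1 else 0) =
      ∑ a, ∑ b, if p a ∧ q b ∧ f a = g b then 1 else 0 := by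
  simp_rw [Finset.sum_mul_sum]
  rw [Finset.sum_comm]
  refine Finset.sum_congr rfl fun a _ => ?_
  rw [Finset.sum_comm]
  refine Finset.sum_congr rfl fun b _ => ?_
  have hprod (c : γ) :
      (if p a ∧ f a = c then (1 : R) else 0) * (if q b ∧ g b = c then 1 else 0) =
        if f a = c then (if p a ∧ q b ∧ f a = g b then 1 else 0) else 0 := by
    by_cases hc : f a = c
    · subst hc
      by_cases ha : p a <;> by_cases hb : q b <;> simp [ha, hb, eq_comm]
    · simp [hc]
  rw [Finset.sum_congr rfl fun c _ => hprod c, Finset.sum_ite_eq]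
  by_cases ha : p a
  · rw [if_pos (hf a ha)]
  · simp [ha]

section WalkCount

variable {A : Type}

noncomputable def walkCount (G : LGraph A) (n : ℕ) (t : LTree A) : ℕ :=
  Set.ncard {w : Fin (n + 1) → G.V | isWalk G w ∧ labelChain G w = t}

variable {G : LGraph A} {n : ℕ} {t : LTree A}

theorem walkCount_eq_sum :
    (walkCount G n t : ℝ) =
      ∑ w : Fin (n + 1) → G.V, if isWalk G w ∧ labelChain G w = t then 1 else 0 := by
  rw [walkCount, Set.ncard_eq_toFinset_card', Set.toFinset_ofPred, Finset.natCast_card_filter]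

theorem psi_eq_walkCount (hb : t.balanced (n + 1)) (hs : t.size = n + 1) :
    psi G t = walkCount G n t := by
  have : {p | isPattern G t p} =
      walkPattern '' {w : Fin (n + 1) → G.V | isWalk G w ∧ labelChain G w = t} := by
    ext p
    constructor
    · intro hp
      obtain ⟨w, hw, rfl, hwt⟩ := exists_walk_of_isPattern hb hs hp
      exact ⟨w, ⟨hw, hwt⟩, rfl⟩
    · rintro ⟨w, ⟨hw, rfl⟩, rfl⟩
      exact isPattern_walkPattern hw
  rw [psi, this, Set.ncard_image_of_injective _ walkPattern_injective, walkCount]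

theorem walkCount_eq_zero (hs : t.size ≠ n + 1) : walkCount G n t = 0 := by
  refine (Set.ncard_eq_zero).2 (Set.eq_empty_of_forall_notMem fun w ⟨_, hw⟩ => hs ?_)
  rw [← hw, size_labelChain]

theorem zero_pow_mul_psi_mul_psi {G1 G2 : LGraph A} (hb : t.balanced (n + 1)) :
    (0 : ℝ) ^ (t.size - (n + 1)) * psi G1 t * psi G2 t =
      walkCount G1 n t * walkCount G2 n t := by
  by_cases hs : t.size = n + 1
  · simp [hs, psi_eq_walkCount hb hs]
  · have := LTree.le_size_of_balanced hb
    simp [walkCount_eq_zero hs, zero_pow (show t.size - (n + 1) ≠ 0 by omega)]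

theorem walkKernel_eq_sum_walkCount_mul {G1 G2 : LGraph A} (s : Finset (LTree A))
    (hs : ∀ w : Fin (n + 1) → G1.V, isWalk G1 w → labelChain G1 w ∈ s) :
    walkKernel G1 G2 n = ∑ t ∈ s, (walkCount G1 n t : ℝ) * walkCount G2 n t := by
  simp only [walkCount_eq_sum]
  rw [Finset.sum_sum_ite_mul_sum_ite_eq s hs, walkKernel]
  simp only [labelChain_eq_labelChain_iff]

end WalkCount

/-- As `λ → 0⁺`, the size-based balanced tree-pattern kernel of order `h` converges
to the walk-count kernel of length `h-1`. -/
theorem stmt_10 {A : Type} (G1 G2 : LGraph A) (h : ℕ) (hh : 1 ≤ h) :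
    Filter.Tendsto
      (fun lam : ℝ =>
        ∑ᶠ t ∈ {t : LTree A | t.balanced h},
          lam ^ (t.size - h) * (psi G1 t : ℝ) * (psi G2 t : ℝ))
      (nhdsWithin 0 (Set.Ioi 0)) (nhds (walkKernel G1 G2 (h - 1))) := by
  obtain ⟨n, rfl⟩ : ∃ n, h = n + 1 := ⟨h - 1, by omega⟩
  have hfin := finite_setOf_balanced_isPattern G1 (n + 1)
  have hsum (lam : ℝ) : ∑ᶠ t ∈ {t : LTree A | t.balanced (n + 1)},
      lam ^ (t.size - (n + 1)) * (psi G1 t : ℝ) * psi G2 t =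
        ∑ t ∈ hfin.toFinset, lam ^ (t.size - (n + 1)) * (psi G1 t : ℝ) * psi G2 t := by
    refine finsum_mem_eq_sum_of_subset _ (fun t ⟨hb, hne⟩ => hfin.mem_toFinset.2 ⟨hb, ?_⟩)
      fun t ht => (hfin.mem_toFinset.1 ht).1
    have hpsi : psi G1 t ≠ 0 := by
      exact_mod_cast right_ne_zero_of_mul (left_ne_zero_of_mul hne)
    exact Set.nonempty_of_ncard_ne_zero hpsi
  simp only [hsum]
  have hcont : Continuous fun lam : ℝ =>
      ∑ t ∈ hfin.toFinset, lam ^ (t.size - (n + 1)) * (psi G1 t : ℝ) * psi G2 t := by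
    fun_prop
  convert (hcont.tendsto 0).mono_left nhdsWithin_le_nhds using 2
  rw [Nat.add_sub_cancel, walkKernel_eq_sum_walkCount_mul hfin.toFinset
    fun w hw => hfin.mem_toFinset.2 ⟨balanced_labelChain w, _, isPattern_walkPattern hw⟩]
  exact Finset.sum_congr rfl fun t ht =>
    (zero_pow_mul_psi_mul_psi (hfin.mem_toFinset.1 ht).1).symm
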